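/- For any nonzero vectors u, v in ℝ^K, the L2 distance between the L1-normalized vectors satisfies ‖u/‖u‖₁ − v/‖v‖₁‖₂ ≤ ((1 + √K)/‖u‖₁) · ‖u − v‖₂. -/

import Mathlib

open Finset

/-
Write `a = ‖u‖₁`, `b = ‖v‖₁` and split
`u / a - v / b = (u - v) / a + (a⁻¹ - b⁻¹) • v`.
The first term has ℓ²-norm `‖u - v‖₂ / a`. For the second, `‖v‖₂ ≤ b` gives
`|a⁻¹ - b⁻¹| ‖v‖₂ ≤ |a - b| / a`, and `|a - b| ≤ ‖u - v‖₁ ≤ √K ‖u - v‖₂` by Cauchy–Schwarz.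
-/

lemma mul_abs_inv_sub_inv_le {a b : ℝ} (ha : 0 < a) (hb : 0 ≤ b) :
    b * |a⁻¹ - b⁻¹| ≤ |a - b| / a := by
  rcases hb.eq_or_lt with rfl | hb
  · simp only [zero_mul]
    positivity
  · rw [inv_sub_inv ha.ne' hb.ne', abs_div, abs_of_pos (mul_pos ha hb), abs_sub_comm]
    field_simp
    rfl

lemma norm_inv_smul_sub_inv_smul_le {E : Type*} [SeminormedAddCommGroup E] [NormedSpace ℝ E]
    {x y : E} {a b C : ℝ} (ha : 0 < a) (hy : ‖y‖ ≤ b) (hab : |a - b| ≤ C * ‖x - y‖) :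
    ‖a⁻¹ • x - b⁻¹ • y‖ ≤ (1 + C) / a * ‖x - y‖ := by
  have hsplit : a⁻¹ • x - b⁻¹ • y = a⁻¹ • (x - y) + (a⁻¹ - b⁻¹) • y := by
    rw [smul_sub, sub_smul]
    abel
  have hcorrection : |a⁻¹ - b⁻¹| * ‖y‖ ≤ |a - b| / a := calc
    |a⁻¹ - b⁻¹| * ‖y‖ ≤ b * |a⁻¹ - b⁻¹| := by
      rw [mul_comm]
      exact mul_le_mul_of_nonneg_right hy (abs_nonneg _)
    _ ≤ |a - b| / a := mul_abs_inv_sub_inv_le ha ((norm_nonneg y).trans hy)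
  calc ‖a⁻¹ • x - b⁻¹ • y‖
      ≤ ‖a⁻¹ • (x - y)‖ + ‖(a⁻¹ - b⁻¹) • y‖ := hsplit ▸ norm_add_le _ _
    _ = a⁻¹ * ‖x - y‖ + |a⁻¹ - b⁻¹| * ‖y‖ := by
      rw [norm_smul, norm_smul, Real.norm_of_nonneg (inv_nonneg.2 ha.le), Real.norm_eq_abs]
    _ ≤ a⁻¹ * ‖x - y‖ + C * ‖x - y‖ / a := by
      gcongr
      exact hcorrection.trans (div_le_div_of_nonneg_right hab ha.le)
    _ = (1 + C) / a * ‖x - y‖ := by ring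

section Fintype

variable {ι : Type*} [Fintype ι]

lemma norm_toLp_two_eq_sqrt_sum_sq (x : ι → ℝ) :
    ‖WithLp.toLp 2 x‖ = √(∑ i, x i ^ 2) := by
  simp [EuclideanSpace.norm_eq]

lemma sqrt_sum_sq_le_sum_abs (x : ι → ℝ) : √(∑ i, x i ^ 2) ≤ ∑ i, |x i| := by
  rw [Real.sqrt_le_left (sum_nonneg fun i _ => abs_nonneg _)]
  simpa only [sq_abs] using sum_sq_le_sq_sum_of_nonneg (s := univ) fun i _ => abs_nonneg (x i)

lemma sum_abs_le_sqrt_card_mul_sqrt_sum_sq (x : ι → ℝ) :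
    ∑ i, |x i| ≤ √(Fintype.card ι) * √(∑ i, x i ^ 2) := by
  rw [← Real.sqrt_mul (Nat.cast_nonneg _),
    Real.le_sqrt (sum_nonneg fun i _ => abs_nonneg _) (by positivity)]
  simpa only [sq_abs, card_univ] using sq_sum_le_card_mul_sum_sq (s := univ) (f := fun i => |x i|)

lemma abs_sum_abs_sub_sum_abs_le (x y : ι → ℝ) :
    |(∑ i, |x i|) - (∑ i, |y i|)| ≤ ∑ i, |x i - y i| := by
  rw [← sum_sub_distrib]
  exact (abs_sum_le_sum_abs _ _).trans (sum_le_sum fun i _ => abs_abs_sub_abs_le_abs_sub _ _)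

end Fintype

theorem stmt_0_general (K : ℕ) (u v : Fin K → ℝ)
    (hu : ∑ i, |u i| ≠ 0) :
    Real.sqrt (∑ i, (u i / (∑ j, |u j|) - v i / (∑ j, |v j|)) ^ 2)
      ≤ ((1 + Real.sqrt K) / (∑ j, |u j|)) * Real.sqrt (∑ i, (u i - v i) ^ 2) := by
  have ha : 0 < ∑ j, |u j| := (sum_nonneg fun j _ => abs_nonneg (u j)).lt_of_ne' hu
  have hnormalizer : |(∑ j, |u j|) - (∑ j, |v j|)| ≤ √K * √(∑ i, (u i - v i) ^ 2) := by
    simpa only [Fintype.card_fin, Pi.sub_apply] using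
      (abs_sum_abs_sub_sum_abs_le u v).trans (sum_abs_le_sqrt_card_mul_sqrt_sum_sq (u - v))
  have key := norm_inv_smul_sub_inv_smul_le (x := WithLp.toLp 2 u) (y := WithLp.toLp 2 v) ha
    (by simpa only [norm_toLp_two_eq_sqrt_sum_sq] using sqrt_sum_sq_le_sum_abs v)
    (by simpa only [← WithLp.toLp_sub, norm_toLp_two_eq_sqrt_sum_sq, Pi.sub_apply]
      using hnormalizer)
  simpa only [← WithLp.toLp_smul, ← WithLp.toLp_sub, norm_toLp_two_eq_sqrt_sum_sq, Pi.sub_apply,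
    Pi.smul_apply, smul_eq_mul, div_eq_inv_mul] using key

/-- For any nonzero vectors `u, v ∈ ℝ^K`, the ℓ² distance between the ℓ¹-normalized
vectors satisfies `‖u/‖u‖₁ − v/‖v‖₁‖₂ ≤ ((1 + √K)/‖u‖₁) · ‖u − v‖₂`. -/
theorem stmt_0 (K : ℕ) (u v : Fin K → ℝ)
    (hu : ∑ i, |u i| ≠ 0) (hv : ∑ i, |v i| ≠ 0) :
    Real.sqrt (∑ i, (u i / (∑ j, |u j|) - v i / (∑ j, |v j|)) ^ 2)
      ≤ ((1 + Real.sqrt K) / (∑ j, |u j|)) * Real.sqrt (∑ i, (u i - v i) ^ 2) :=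
  stmt_0_general K u v hu
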